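/- Let B ∈ SU_n and suppose B = A_{(θ_1,x_1)}⋯A_{(θ_k,x_k)} where each x_j is a unit vector with x_j ∈_min ℂ^{m_j}, m_1 < m_2 < ⋯ < m_k, and each θ_j is not an integer multiple of 2π. Then each of the three matrices B⁻¹, B̄ (the entrywise complex conjugate of B), and Bᵀ admits a factorization of the same form with the same sequence (m_1,…,m_k): namely, as an ordered product of k pseudo-rotations A_{(θ'_1,x'_1)}⋯A_{(θ'_k,x'_k)} with unit vectors x'_j ∈_min ℂ^{m_j} and angles θ'_j not integer multiples of 2π. -/

import Mathlib

open Matrix Complex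

/-- The pseudo-rotation `A_{(θ,x)} = Iₙ − (1 − e^{iθ})·x·x̄ᵀ`. -/
noncomputable def pseudoRot {n : ℕ} (θ : ℝ) (x : Fin n → ℂ) : Matrix (Fin n) (Fin n) ℂ :=
  1 - (1 - Complex.exp (θ * Complex.I)) • Matrix.vecMulVec x (star x)

/-- `x` minimally belongs to `ℂ^k` (1-based coordinates `k+1,…,n` vanish and the
`k`-th coordinate is nonzero). -/
def minBelongs {n : ℕ} (x : Fin n → ℂ) (k : ℕ) : Prop :=
  (∀ i : Fin n, k ≤ (i : ℕ) → x i = 0) ∧ ∃ i : Fin n, (i : ℕ) + 1 = k ∧ x i ≠ 0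

/-- `C` is an ordered product of `k` pseudo-rotations whose unit vectors minimally
belong to `ℂ^{m 0}, …, ℂ^{m (k-1)}` and whose angles are not integer multiples of `2π`. -/
def hasOrderedFactorization {n : ℕ} (C : Matrix (Fin n) (Fin n) ℂ) (k : ℕ) (m : ℕ → ℕ) : Prop :=
  ∃ (θ : ℕ → ℝ) (x : ℕ → Fin n → ℂ),
    (∀ j < k, star (x j) ⬝ᵥ x j = 1 ∧ minBelongs (x j) (m j) ∧
      ¬ ∃ t : ℤ, θ j = 2 * Real.pi * t) ∧
    C = (List.ofFn fun j : Fin k => pseudoRot (θ j) (x j)).prod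

lemma pseudoRot_apply {n : ℕ} (θ : ℝ) (x : Fin n → ℂ) (i j : Fin n) :
    pseudoRot θ x i j
      = (if i = j then 1 else 0) - (1 - Complex.exp (θ * Complex.I)) * (x i * star (x j)) := by
  simp [pseudoRot, Matrix.sub_apply, Matrix.smul_apply, Matrix.vecMulVec_apply, Matrix.one_apply]

lemma pseudoRot_mul {n : ℕ} (θ φ : ℝ) (x : Fin n → ℂ) (hx : star x ⬝ᵥ x = 1) :
    pseudoRot θ x * pseudoRot φ x = pseudoRot (θ + φ) x := by
  have hM : Matrix.vecMulVec x (star x) * Matrix.vecMulVec x (star x)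
      = Matrix.vecMulVec x (star x) := by
    ext i j
    simp only [Matrix.mul_apply, Matrix.vecMulVec_apply]
    have : ∀ l, x i * star x l * (x l * star x j) = (x i * star x j) * (star x l * x l) := by
      intro l; ring
    rw [Finset.sum_congr rfl fun l _ => this l, ← Finset.mul_sum]
    have : (∑ l, star x l * x l) = star x ⬝ᵥ x := rfl
    rw [this, hx, mul_one]
  have he : Complex.exp (θ * Complex.I) * Complex.exp (φ * Complex.I)
      = Complex.exp ((θ + φ : ℝ) * Complex.I) := by
    rw [← Complex.exp_add]; congr 1; push_cast; ring
  simp only [pseudoRot, sub_mul, mul_sub, mul_one, one_mul, Matrix.smul_mul, Matrix.mul_smul,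
    smul_smul, hM]
  rw [← he]; ext i j; simp [Matrix.sub_apply, Matrix.smul_apply]; ring

lemma pseudoRot_zero {n : ℕ} (x : Fin n → ℂ) : pseudoRot 0 x = 1 := by
  simp [pseudoRot]

lemma pseudoRot_conjTranspose {n : ℕ} (θ : ℝ) (x : Fin n → ℂ) :
    (pseudoRot θ x)ᴴ = pseudoRot (-θ) x := by
  have hc : star (Complex.exp (θ * Complex.I)) = Complex.exp ((-θ : ℝ) * Complex.I) := by
    rw [show (star (Complex.exp (θ * Complex.I)) : ℂ)
        = (starRingEnd ℂ) (Complex.exp (θ * Complex.I)) from rfl, ← Complex.exp_conj]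
    congr 1
    simp only [_root_.map_mul, Complex.conj_I, Complex.conj_ofReal]
    push_cast; ring
  ext i j
  simp only [Matrix.conjTranspose_apply, pseudoRot_apply, star_sub, star_mul', star_one,
    star_star, apply_ite (star : ℂ → ℂ), star_zero, hc]
  have hij : (if j = i then (1:ℂ) else 0) = if i = j then 1 else 0 := by simp [eq_comm]
  rw [hij]; ring

lemma pseudoRot_mem_unitary {n : ℕ} (θ : ℝ) (x : Fin n → ℂ) (hx : star x ⬝ᵥ x = 1) :
    pseudoRot θ x ∈ Matrix.unitaryGroup (Fin n) ℂ := by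
  rw [Matrix.mem_unitaryGroup_iff, Matrix.star_eq_conjTranspose, pseudoRot_conjTranspose,
    pseudoRot_mul θ (-θ) x hx]
  simp [pseudoRot_zero]

lemma pseudoRot_swap {n : ℕ} (θ : ℝ) (x : Fin n → ℂ) (D : Matrix (Fin n) (Fin n) ℂ)
    (hD : D * Dᴴ = 1) :
    pseudoRot θ x * D = D * pseudoRot θ (Dᴴ *ᵥ x) := by
  have hDx : D *ᵥ (Dᴴ *ᵥ x) = x := by
    rw [Matrix.mulVec_mulVec, hD, Matrix.one_mulVec]
  ext i j
  simp only [Matrix.mul_apply, pseudoRot_apply]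
  have hL : ∀ l, ((if i = l then (1:ℂ) else 0) - (1 - Complex.exp (θ * Complex.I))
        * (x i * star (x l))) * D l j
      = (if i = l then D l j else 0)
        - (1 - Complex.exp (θ * Complex.I)) * (x i * (star (x l) * D l j)) := by
    intro l; split_ifs <;> ring
  have hR : ∀ l, D i l * ((if l = j then (1:ℂ) else 0) - (1 - Complex.exp (θ * Complex.I))
        * ((Dᴴ *ᵥ x) l * star ((Dᴴ *ᵥ x) j)))
      = (if l = j then D i l else 0)
        - (1 - Complex.exp (θ * Complex.I)) * ((D i l * (Dᴴ *ᵥ x) l) * star ((Dᴴ *ᵥ x) j)) := by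
    intro l; split_ifs <;> ring
  rw [Finset.sum_congr rfl fun l _ => hL l, Finset.sum_congr rfl fun l _ => hR l,
    Finset.sum_sub_distrib, Finset.sum_sub_distrib]
  congr 1
  · simp
  · have h1 : (∑ l, D i l * (Dᴴ *ᵥ x) l) = x i := by
      have := congrFun hDx i
      simpa [Matrix.mulVec, dotProduct] using this
    have h2 : (∑ l, star (x l) * D l j) = star ((Dᴴ *ᵥ x) j) := by
      simp only [Matrix.mulVec, dotProduct, Matrix.conjTranspose_apply, star_sum,
        star_mul', star_star]
      exact Finset.sum_congr rfl fun l _ => by ring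
    have L : (∑ l, (1 - Complex.exp (θ * Complex.I)) * (x i * (star (x l) * D l j)))
        = ((1 - Complex.exp (θ * Complex.I)) * x i) * (∑ l, star (x l) * D l j) := by
      rw [Finset.mul_sum]
      exact Finset.sum_congr rfl fun l _ => by ring
    have R : (∑ l, (1 - Complex.exp (θ * Complex.I))
          * (D i l * (Dᴴ *ᵥ x) l * star ((Dᴴ *ᵥ x) j)))
        = (∑ l, D i l * (Dᴴ *ᵥ x) l)
          * ((1 - Complex.exp (θ * Complex.I)) * star ((Dᴴ *ᵥ x) j)) := by
      rw [Finset.sum_mul]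
      exact Finset.sum_congr rfl fun l _ => by ring
    rw [L, R, h1, h2]
    ring

lemma unit_mulVec {n : ℕ} (x : Fin n → ℂ) (D : Matrix (Fin n) (Fin n) ℂ)
    (hD : D * Dᴴ = 1) (hx : star x ⬝ᵥ x = 1) :
    star (Dᴴ *ᵥ x) ⬝ᵥ (Dᴴ *ᵥ x) = 1 := by
  rw [Matrix.star_mulVec, Matrix.conjTranspose_conjTranspose,
    Matrix.dotProduct_mulVec, Matrix.vecMul_vecMul, hD, Matrix.vecMul_one, hx]

/-- columns with index `≥ M` (1-based) are standard basis vectors -/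
def colId {n : ℕ} (M : ℕ) (D : Matrix (Fin n) (Fin n) ℂ) : Prop :=
  ∀ l i : Fin n, M ≤ (i : ℕ) + 1 → D l i = (1 : Matrix (Fin n) (Fin n) ℂ) l i

lemma colId_one {n : ℕ} (M : ℕ) : colId M (1 : Matrix (Fin n) (Fin n) ℂ) :=
  fun _ _ _ => rfl

lemma colId_mul {n : ℕ} {M : ℕ} {A B : Matrix (Fin n) (Fin n) ℂ}
    (hA : colId M A) (hB : colId M B) : colId M (A * B) := by
  intro l i hi
  rw [Matrix.mul_apply]
  have : ∀ t, A l t * B t i = A l t * (if t = i then 1 else 0) := by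
    intro t
    rw [hB t i hi, Matrix.one_apply]
  rw [Finset.sum_congr rfl fun t _ => this t]
  simp [hA l i hi]

lemma colId_pseudoRot {n : ℕ} {M : ℕ} (θ : ℝ) {y : Fin n → ℂ}
    (hy : ∀ i : Fin n, M ≤ (i : ℕ) + 1 → y i = 0) : colId M (pseudoRot θ y) := by
  intro l i hi
  rw [pseudoRot_apply, hy i hi, Matrix.one_apply]
  simp

lemma colId_mulVec_eq {n : ℕ} {M : ℕ} {D : Matrix (Fin n) (Fin n) ℂ} (hD : colId M D)
    (x : Fin n → ℂ) (i : Fin n) (hi : M ≤ (i : ℕ) + 1) : (Dᴴ *ᵥ x) i = x i := by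
  simp only [Matrix.mulVec, dotProduct, Matrix.conjTranspose_apply]
  have : ∀ l, star (D l i) * x l = (if l = i then 1 else 0) * x l := by
    intro l
    rw [hD l i hi, Matrix.one_apply]
    split_ifs <;> simp
  rw [Finset.sum_congr rfl fun l _ => this l]
  simp

lemma colId_list_prod {n : ℕ} {M : ℕ} :
    ∀ (L : List (Matrix (Fin n) (Fin n) ℂ)), (∀ A ∈ L, colId M A) → colId M L.prod
  | [], _ => by simpa using colId_one M
  | (A :: L), h => by
    rw [List.prod_cons]
    exact colId_mul (h A (List.mem_cons_self))
      (colId_list_prod L fun B hB => h B (List.mem_cons_of_mem A hB))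

lemma sortProd {n : ℕ} (k : ℕ) (m : ℕ → ℕ) (θ : ℕ → ℝ) (x : ℕ → Fin n → ℂ)
    (hm : ∀ i j, i < j → j < k → m i < m j)
    (h : ∀ j < k, star (x j) ⬝ᵥ x j = 1 ∧ minBelongs (x j) (m j) ∧
      ¬ ∃ t : ℤ, θ j = 2 * Real.pi * t) :
    hasOrderedFactorization
      ((List.ofFn fun j : Fin k => pseudoRot (θ j) (x j)).reverse.prod) k m := by
  induction k with
  | zero => exact ⟨θ, x, fun j hj => absurd hj (Nat.not_lt_zero j), by simp⟩
  | succ k ih =>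
    obtain ⟨θ', x', hprops, hEq⟩ :=
      ih (fun i j hij hjk => hm i j hij (hjk.trans (Nat.lt_succ_self k)))
        (fun j hj => h j (hj.trans (Nat.lt_succ_self k)))
    set D := (List.ofFn fun j : Fin k => pseudoRot (θ' j) (x' j)).prod with hDdef
    have hDmem : D ∈ Matrix.unitaryGroup (Fin n) ℂ := by
      apply Submonoid.list_prod_mem
      intro A hA
      obtain ⟨j, rfl⟩ := List.mem_ofFn.mp hA
      exact pseudoRot_mem_unitary _ _ (hprops j j.isLt).1
    have hDu : D * Dᴴ = 1 := by
      have := Matrix.mem_unitaryGroup_iff.mp hDmem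
      rwa [Matrix.star_eq_conjTranspose] at this
    have hDcol : colId (m k) D := by
      apply colId_list_prod
      intro A hA
      obtain ⟨j, rfl⟩ := List.mem_ofFn.mp hA
      apply colId_pseudoRot
      intro i hi
      apply (hprops j j.isLt).2.1.1
      have hjk : m (j : ℕ) < m k := hm j k j.isLt (Nat.lt_succ_self k)
      omega
    have hxk := h k (Nat.lt_succ_self k)
    set y : Fin n → ℂ := Dᴴ *ᵥ x k with hydef
    have hyunit : star y ⬝ᵥ y = 1 := unit_mulVec (x k) D hDu hxk.1
    have hymin : minBelongs y (m k) := by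
      constructor
      · intro i hi
        rw [hydef, colId_mulVec_eq hDcol (x k) i (by omega)]
        exact hxk.2.1.1 i hi
      · obtain ⟨i, hi1, hi2⟩ := hxk.2.1.2
        refine ⟨i, hi1, ?_⟩
        rw [hydef, colId_mulVec_eq hDcol (x k) i (by omega)]
        exact hi2
    refine ⟨fun j => if j = k then θ k else θ' j,
      fun j => if j = k then y else x' j, ?_, ?_⟩
    · intro j hj
      by_cases hjk : j = k
      · subst hjk
        simp only [if_pos rfl]
        exact ⟨hyunit, hymin, hxk.2.2⟩
      · have hjk' : j < k := by omega
        simp only [if_neg hjk]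
        exact hprops j hjk'
    · have hsplit : (List.ofFn fun j : Fin (k+1) => pseudoRot (θ (j : ℕ)) (x (j : ℕ)))
          = (List.ofFn fun j : Fin k =>
              pseudoRot (θ (j : ℕ)) (x (j : ℕ))).concat (pseudoRot (θ k) (x k)) := by
        rw [List.ofFn_succ']
        rfl
      rw [hsplit, List.concat_eq_append, List.reverse_append]
      simp only [List.reverse_cons, List.reverse_nil, List.nil_append, List.singleton_append,
        List.prod_cons]
      rw [hEq, pseudoRot_swap (θ k) (x k) D hDu]
      have hsplit2 : (List.ofFn fun j : Fin (k+1) =>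
            pseudoRot (if (j : ℕ) = k then θ k else θ' (j : ℕ))
              (if (j : ℕ) = k then y else x' (j : ℕ)))
          = (List.ofFn fun j : Fin k =>
              pseudoRot (θ' (j : ℕ)) (x' (j : ℕ))).concat (pseudoRot (θ k) y) := by
        rw [List.ofFn_succ']
        congr 1
        · refine congrArg List.ofFn (funext fun j => ?_)
          have hne : (j : ℕ) ≠ k := Nat.ne_of_lt j.isLt
          simp only [Fin.coe_castSucc, if_neg hne]
        · simp
      rw [hsplit2, List.concat_eq_append, List.prod_append, List.prod_cons, List.prod_nil,
        mul_one]

lemma pseudoRot_transpose {n : ℕ} (θ : ℝ) (x : Fin n → ℂ) :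
    (pseudoRot θ x)ᵀ = pseudoRot θ (star x) := by
  ext i j
  simp only [Matrix.transpose_apply, pseudoRot_apply, Pi.star_apply, star_star]
  have hij : (if j = i then (1:ℂ) else 0) = if i = j then 1 else 0 := by simp [eq_comm]
  rw [hij]; ring

lemma pseudoRot_map_star {n : ℕ} (θ : ℝ) (x : Fin n → ℂ) :
    (pseudoRot θ x).map (starRingEnd ℂ) = pseudoRot (-θ) (star x) := by
  have hc : (starRingEnd ℂ) (Complex.exp (θ * Complex.I))
      = Complex.exp ((-θ : ℝ) * Complex.I) := by
    rw [← Complex.exp_conj]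
    congr 1
    simp only [_root_.map_mul, Complex.conj_I, Complex.conj_ofReal]
    push_cast; ring
  ext i j
  simp only [Matrix.map_apply, pseudoRot_apply, map_sub, _root_.map_mul, _root_.map_one,
    apply_ite (starRingEnd ℂ), _root_.map_zero, hc, Pi.star_apply, star_star]
  rw [show (starRingEnd ℂ) (star (x j)) = x j from by
      rw [show star (x j) = (starRingEnd ℂ) (x j) from rfl, Complex.conj_conj]]
  rw [show star (x i) = (starRingEnd ℂ) (x i) from rfl]

lemma minBelongs_star {n : ℕ} {x : Fin n → ℂ} {M : ℕ} (h : minBelongs x M) :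
    minBelongs (star x) M := by
  obtain ⟨h1, i, hi1, hi2⟩ := h
  exact ⟨fun i hi => by simp [Pi.star_apply, h1 i hi],
    ⟨i, hi1, by simp [Pi.star_apply, star_eq_zero]; exact hi2⟩⟩

lemma star_unit {n : ℕ} {x : Fin n → ℂ} (h : star x ⬝ᵥ x = 1) :
    star (star x) ⬝ᵥ star x = 1 := by
  simp only [dotProduct, Pi.star_apply, star_star] at h ⊢
  rw [← h]
  exact Finset.sum_congr rfl fun l _ => mul_comm _ _


set_option maxHeartbeats 2000000 in
theorem stmt9 {n : ℕ} (B : Matrix (Fin n) (Fin n) ℂ)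
    (hU : B ∈ Matrix.unitaryGroup (Fin n) ℂ) (hdet : B.det = 1)
    (k : ℕ) (m : ℕ → ℕ) (θ : ℕ → ℝ) (x : ℕ → Fin n → ℂ)
    (hm : ∀ i j, i < j → j < k → m i < m j)
    (hx : ∀ j < k, star (x j) ⬝ᵥ x j = 1 ∧ minBelongs (x j) (m j))
    (hθ : ∀ j < k, ¬ ∃ t : ℤ, θ j = 2 * Real.pi * t)
    (hB : B = (List.ofFn fun j : Fin k => pseudoRot (θ j) (x j)).prod) :
    hasOrderedFactorization B⁻¹ k m ∧
    hasOrderedFactorization (B.map star) k m ∧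
    hasOrderedFactorization Bᵀ k m := by
  have hnegθ : ∀ j < k, ¬ ∃ t : ℤ, -(θ j) = 2 * Real.pi * t := by
    intro j hj ⟨t, ht⟩
    exact hθ j hj ⟨-t, by push_cast; linarith⟩
  refine ⟨?_, ?_, ?_⟩
  · -- B⁻¹
    have hinv : B⁻¹ = Bᴴ := by
      rw [← Matrix.star_eq_conjTranspose]
      exact Matrix.inv_eq_left_inv (Matrix.mem_unitaryGroup_iff'.mp hU)
    have h1 : B⁻¹ = (List.ofFn fun j : Fin k => pseudoRot (-(θ (j : ℕ))) (x (j : ℕ))).reverse.prod := by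
      rw [hinv, hB, Matrix.conjTranspose_list_prod, List.map_ofFn]
      congr 2
      exact congrArg List.ofFn (funext fun j => pseudoRot_conjTranspose _ _)
    obtain ⟨θ'', x'', hp, hpe⟩ := sortProd k m (fun j => -(θ j)) x hm
      (fun j hj => ⟨(hx j hj).1, (hx j hj).2, hnegθ j hj⟩)
    exact ⟨θ'', x'', hp, h1.trans hpe⟩
  · -- B.map star
    have h2 : B.map star = (List.ofFn fun j : Fin k =>
        pseudoRot (-(θ (j : ℕ))) (star (x (j : ℕ)))).prod := by
      have hBs : B.map star = (RingHom.mapMatrix (starRingEnd ℂ)) B := rfl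
      rw [hBs, hB, map_list_prod, List.map_ofFn]
      congr 1
      exact congrArg List.ofFn (funext fun j => pseudoRot_map_star _ _)
    exact ⟨fun j => -(θ j), fun j => star (x j),
      fun j hj => ⟨star_unit (hx j hj).1, minBelongs_star (hx j hj).2, hnegθ j hj⟩, h2⟩
  · -- Bᵀ
    have h3 : Bᵀ = (List.ofFn fun j : Fin k =>
        pseudoRot (θ (j : ℕ)) (star (x (j : ℕ)))).reverse.prod := by
      rw [hB, Matrix.transpose_list_prod, List.map_ofFn]
      congr 2
      exact congrArg List.ofFn (funext fun j => pseudoRot_transpose _ _)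
    obtain ⟨θ'', x'', hp, hpe⟩ := sortProd k m θ (fun j => star (x j)) hm
      (fun j hj => ⟨star_unit (hx j hj).1, minBelongs_star (hx j hj).2, hθ j hj⟩)
    exact ⟨θ'', x'', hp, h3.trans hpe⟩
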